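/- Let H be a normal subgroup of π₁(X, x₀) and let X be H-SLT at x₀. Then the fiber (p_H⁻¹(x₀))^wh is a topological group. -/

import Mathlib

open Set TopologicalSpace unitInterval

universe u

namespace SLTF

attribute [local instance] Path.Homotopic.setoid

variable {X : Type u} [TopologicalSpace X]

/-- The homotopy class of a loop as an element of the fundamental group. -/
noncomputable def fl {x : X} (γ : Path x x) : FundamentalGroup X x :=
  @FundamentalGroup.fromPath X _ x ⟦γ⟧

/-- Multiplication of fundamental-group elements in path-concatenation order:
`pmul a b` is the class of "`a` followed by `b`". -/
noncomputable def pmul {x : X} (a b : FundamentalGroup X x) : FundamentalGroup X x :=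
  @FundamentalGroup.fromPath X _ x
    (Path.Homotopic.Quotient.trans (@FundamentalGroup.toPath X _ x a)
      (@FundamentalGroup.toPath X _ x b))

/-- A path in `X` starting at the base point `x`, recorded together with its end point. -/
structure PPath (X : Type u) [TopologicalSpace X] (x : X) where
  target : X
  path : Path x target

/-- Two paths starting at `x` are identified when they have the same end point and the
class of `α ⬝ β⁻¹` satisfies the predicate `P` (e.g. membership in a subgroup `H`). -/
def HRel (x : X) (P : Path x x → Prop) (α β : PPath X x) : Prop :=
  ∃ h : α.target = β.target, P (α.path.trans ((β.path.cast rfl h).symm))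

/-- The set `X̃` of `P`-equivalence classes of paths starting at `x`. -/
def Xtilde (x : X) (P : Path x x → Prop) : Type u := Quot (HRel x P)

/-- The class of a path in `X̃`. -/
def mkX (x : X) (P : Path x x → Prop) (α : PPath X x) : Xtilde x P := Quot.mk _ α

/-- The basic whisker-open set `([α], U)`: all classes of prolongations of `α` by a path in `U`. -/
def whBasic (x : X) (P : Path x x → Prop) (α : PPath X x) (U : Set X) : Set (Xtilde x P) :=
  { q | ∃ (y : X) (β : Path α.target y), range ⇑β ⊆ U ∧ q = mkX x P ⟨y, α.path.trans β⟩ }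

/-- The whisker topology on `X̃`, generated by the sets `([α], U)` for `U` an open
neighbourhood of the end point of `α`. -/
instance whTop (x : X) (P : Path x x → Prop) : TopologicalSpace (Xtilde x P) :=
  generateFrom
    { S | ∃ (α : PPath X x) (U : Set X), IsOpen U ∧ α.target ∈ U ∧ S = whBasic x P α U }

/-- The endpoint projection `p : X̃ → X`. -/
def endpt (x : X) (P : Path x x → Prop) : Xtilde x P → X :=
  Quot.lift (fun α => α.target) (fun _ _ h => h.elim fun e _ => e)

/-- The space of paths in `X` starting at `x`, with the compact-open topology. -/
def PSp (X : Type u) [TopologicalSpace X] (x : X) : Type u := { f : C(I, X) // f 0 = x }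

instance (x : X) : TopologicalSpace (PSp X x) := instTopologicalSpaceSubtype

/-- The natural surjection from the path space onto `X̃`. -/
def toXt (x : X) (P : Path x x → Prop) : PSp X x → Xtilde x P :=
  fun f => mkX x P ⟨f.1 1, ⟨f.1, f.2, rfl⟩⟩

/-- The quotient of the compact-open topology on `X̃`. -/
def topTop (x : X) (P : Path x x → Prop) : TopologicalSpace (Xtilde x P) :=
  coinduced (toXt x P) inferInstance

/-- Membership in a subgroup `H`, as a predicate on loops. -/
noncomputable def loopMem (x : X) (H : Subgroup (FundamentalGroup X x)) : Path x x → Prop :=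
  fun γ => fl γ ∈ H

/-- `X̃_H`, the classes of paths starting at `x₀` modulo `H`. -/
abbrev XtildeH (x₀ : X) (H : Subgroup (FundamentalGroup X x₀)) : Type u :=
  Xtilde x₀ (loopMem x₀ H)

/-- The fiber of the endpoint projection over `y`, with the subspace (whisker) topology. -/
abbrev Fib (x : X) (P : Path x x → Prop) (y : X) : Type u :=
  { q : Xtilde x P // endpt x P q = y }

/-- The class in the fiber over `y` of a path from `x` to `y`. -/
def mkFib (x : X) (P : Path x x → Prop) {y : X} (δ : Path x y) : Fib x P y :=
  ⟨mkX x P ⟨y, δ⟩, rfl⟩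

/-- The whisker topology on the fundamental group `π₁(X, x)`: basic neighbourhoods of `a`
are the sets `{a ⋆ [γ] : γ a loop in U at x}` for `U` an open neighbourhood of `x`. -/
noncomputable def whPi1 (x : X) : TopologicalSpace (FundamentalGroup X x) :=
  generateFrom
    { S | ∃ (a : FundamentalGroup X x) (U : Set X), IsOpen U ∧ x ∈ U ∧
        S = { b | ∃ γ : Path x x, range ⇑γ ⊆ U ∧ b = pmul a (fl γ) } }

/-- The quotient topology on `π₁(X, x)` induced from the loop space with the
compact-open topology. -/
noncomputable def qtopPi1 (x : X) : TopologicalSpace (FundamentalGroup X x) :=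
  coinduced (fun γ : Path x x => fl γ) inferInstance

/-- `X` is `H`-SLT at `x₀`. -/
noncomputable def IsHSLTAt (x₀ : X) (H : Subgroup (FundamentalGroup X x₀)) : Prop :=
  ∀ (y : X) (α : Path x₀ y) (U : Set X), IsOpen U → x₀ ∈ U →
    ∃ V : Set X, IsOpen V ∧ y ∈ V ∧
      ∀ β : Path y y, range ⇑β ⊆ V →
        ∃ γ : Path x₀ x₀, range ⇑γ ⊆ U ∧
          fl ((α.trans (β.trans α.symm)).trans γ.symm) ∈ H

/-- `X` is SLT at `x`. -/
def IsSLTAt (X : Type u) [TopologicalSpace X] (x : X) : Prop :=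
  ∀ (y : X) (α : Path x y) (U : Set X), IsOpen U → x ∈ U →
    ∃ V : Set X, IsOpen V ∧ y ∈ V ∧
      ∀ β : Path y y, range ⇑β ⊆ V →
        ∃ γ : Path x x, range ⇑γ ⊆ U ∧ (α.trans (β.trans α.symm)).Homotopic γ

/-- `X` is an SLT space. -/
def IsSLT (X : Type u) [TopologicalSpace X] : Prop := ∀ x : X, IsSLTAt X x

/-- `α` (a path from `x` to `y`) is an `H`-SLT path: for every path `lam` from `x₀` to `x`
and open `U ∋ x` there is an open `V ∋ y` such that every loop `β` in `V` at `y` transfers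
to a loop `γ` in `U` at `x` with `[α ⋆ β ⋆ α⁻¹ ⋆ γ⁻¹] ∈ [lam⁻¹ H lam]`, i.e.
`[lam ⋆ (α ⋆ β ⋆ α⁻¹ ⋆ γ⁻¹) ⋆ lam⁻¹] ∈ H`. -/
noncomputable def IsHSLTPath (x₀ : X) (H : Subgroup (FundamentalGroup X x₀)) {x y : X}
    (α : Path x y) : Prop :=
  ∀ (lam : Path x₀ x) (U : Set X), IsOpen U → x ∈ U →
    ∃ V : Set X, IsOpen V ∧ y ∈ V ∧
      ∀ β : Path y y, range ⇑β ⊆ V →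
        ∃ γ : Path x x, range ⇑γ ⊆ U ∧
          fl (lam.trans ((((α.trans (β.trans α.symm)).trans γ.symm)).trans lam.symm)) ∈ H

/-- `X` is an `H`-SLT space: for every `x` and every path `lam` from `x₀` to `x`, `X` is
`[lam⁻¹ H lam]`-SLT at `x`. -/
noncomputable def IsHSLTSpace (x₀ : X) (H : Subgroup (FundamentalGroup X x₀)) : Prop :=
  ∀ (x y : X) (α : Path x y), IsHSLTPath x₀ H α

/-- Membership in the conjugate subgroup `[lam⁻¹ H lam]` of `π₁(X, x)`,
as a predicate on loops at `x`. -/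
noncomputable def conjMem (x₀ : X) (H : Subgroup (FundamentalGroup X x₀)) {x : X}
    (lam : Path x₀ x) : Path x x → Prop :=
  fun δ => fl (lam.trans (δ.trans lam.symm)) ∈ H

/-- `X` is homotopically Hausdorff relative to `H`. -/
noncomputable def HomHausdorffRel (x₀ : X) (H : Subgroup (FundamentalGroup X x₀)) : Prop :=
  ∀ (y : X) (α : Path x₀ y) (g : FundamentalGroup X x₀), g ∉ H →
    ∃ U : Set X, IsOpen U ∧ y ∈ U ∧
      ∀ γ : Path y y, range ⇑γ ⊆ U →
        ¬ ∃ h ∈ H, fl (α.trans (γ.trans α.symm)) = pmul h g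

/-- `X` is homotopically path Hausdorff relative to `H`. -/
noncomputable def HomPathHausdorffRel (x₀ : X) (H : Subgroup (FundamentalGroup X x₀)) : Prop :=
  ∀ (y : X) (α β : Path x₀ y), fl (α.trans β.symm) ∉ H →
    ∃ (n : ℕ) (t : Fin (n + 1) → I) (U : Fin n → Set X),
      t 0 = 0 ∧ t (Fin.last n) = 1 ∧ StrictMono t ∧
      (∀ i : Fin n, IsOpen (U i)) ∧
      (∀ i : Fin n, ⇑α '' Set.Icc (t i.castSucc) (t i.succ) ⊆ U i) ∧
      ∀ γ : Path x₀ y,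
        (∀ i : Fin n, ⇑γ '' Set.Icc (t i.castSucc) (t i.succ) ⊆ U i) →
        (∀ i : Fin (n + 1), γ (t i) = α (t i)) →
        fl (γ.trans β.symm) ∉ H

/-- The endpoint projection `p : X̃ → X` (with the whisker topology on `X̃`) has the
unique path lifting property. -/
def UPLP (x : X) (P : Path x x → Prop) : Prop :=
  ∀ g₁ g₂ : C(I, Xtilde x P), g₁ 0 = g₂ 0 →
    (∀ t, endpt x P (g₁ t) = endpt x P (g₂ t)) → g₁ = g₂

/-- A semicovering map: a local homeomorphism with (continuous) unique lifting of paths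
and of homotopies. -/
structure IsSemicovering {Y : Type u} [TopologicalSpace Y] (p : Y → X) : Prop where
  localHomeo : IsLocalHomeomorph p
  pathLift : ∀ (y : Y) (γ : C(I, X)), γ 0 = p y →
    ∃! γh : C(I, Y), γh 0 = y ∧ ∀ t, p (γh t) = γ t
  contPathLift : ∀ y : Y, ∃ L : { γ : C(I, X) // γ 0 = p y } → C(I, Y),
    Continuous L ∧ ∀ γ, (L γ) 0 = y ∧ ∀ t, p ((L γ) t) = (γ : C(I, X)) t
  homotopyLift : ∀ (y : Y) (Φ : C(I × I, X)), Φ (0, 0) = p y →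
    ∃! Φh : C(I × I, Y), Φh (0, 0) = y ∧ ∀ z, p (Φh z) = Φ z
  contHomotopyLift : ∀ y : Y, ∃ L : { Φ : C(I × I, X) // Φ (0, 0) = p y } → C(I × I, Y),
    Continuous L ∧ ∀ Φ, (L Φ) (0, 0) = y ∧ ∀ z, p ((L Φ) z) = (Φ : C(I × I, X)) z

/-- An `lpc₀`-covering map with `p₊π₁(Y, ·) = H`: a map which is equivalent, as a map
over `X`, to the endpoint projection `p_H : X̃_H → X` having the unique path lifting
property (with `Y` path connected and locally path connected). -/
structure IsLpc0Covering {Y : Type u} [TopologicalSpace Y] (p : Y → X) (x₀ : X)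
    (H : Subgroup (FundamentalGroup X x₀)) : Prop where
  pathConnected : PathConnectedSpace Y
  locPathConnected : LocPathConnectedSpace Y
  uplp : UPLP x₀ (loopMem x₀ H)
  equiv : ∃ φ : Y ≃ₜ XtildeH x₀ H, ∀ y, endpt x₀ (loopMem x₀ H) (φ y) = p y

/-- The homomorphism induced by `p` on fundamental groups, as a function. -/
noncomputable def pStar {Y : Type u} [TopologicalSpace Y] (p : C(Y, X)) (y₀ : Y) :
    FundamentalGroup Y y₀ → FundamentalGroup X (p y₀) :=
  fun g => @FundamentalGroup.fromPath X _ (p y₀)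
    (Path.Homotopic.Quotient.map (@FundamentalGroup.toPath Y _ y₀ g) p)

/-!
The whisker neighbourhoods `([γ], U)` of a point `[γ]_H` form a neighbourhood basis of `X̃_H`, so in
the fiber over `x₀` the neighbourhoods of `[a]` are the sets `{[a ⋆ β] : β a loop in U at x₀}`.
For continuity of the product at `([a], [b])`, a small loop `β₁` following `a` is moved across `b`
by the `H`-SLT property (applied to the path `b⁻¹`), which yields a loop `γ` in `U` with
`[a ⋆ β₁] · [b ⋆ β₂] = [a ⋆ b ⋆ γ ⋆ β₂]`: the two representatives differ by a conjugate of an element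
of `H`, and this is where normality of `H` is used. Inversion is handled in the same way, moving
`β⁻¹` across `c` at the point `[c]`.
-/

section PathClasses

open Path.Homotopic.Quotient

lemma fl_eq_fl_iff {x : X} {γ γ' : Path x x} : fl γ = fl γ' ↔ mk γ = mk γ' := Iff.rfl

lemma fl_trans {x : X} (p q : Path x x) : fl (p.trans q) = fl q * fl p := rfl

lemma fl_symm {x : X} (p : Path x x) : fl p.symm = (fl p)⁻¹ := rfl

lemma fl_refl (x : X) : fl (Path.refl x) = 1 := rfl

lemma fl_trans_symm_mul {x y : X} (a b c : Path x y) :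
    fl (b.trans c.symm) * fl (a.trans b.symm) = fl (a.trans c.symm) := by
  rw [← fl_trans, fl_eq_fl_iff]
  simp only [mk_trans, mk_symm, trans_assoc]
  grind

lemma fl_trans_symm_self {x y : X} (a : Path x y) : fl (a.trans a.symm) = 1 := by
  rw [← fl_refl, fl_eq_fl_iff]; simp

lemma inv_fl_trans_symm {x y : X} (a b : Path x y) :
    (fl (a.trans b.symm))⁻¹ = fl (b.trans a.symm) := by
  rw [← fl_symm, fl_eq_fl_iff]; simp

lemma fl_trans_trans_symm {x y z : X} (a b : Path x y) (c : Path y z) :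
    fl ((a.trans c).trans (b.trans c).symm) = fl (a.trans b.symm) := by
  rw [fl_eq_fl_iff]
  simp only [Path.trans_symm, mk_trans, mk_symm, trans_assoc]
  grind

lemma fl_trans_symm_of_homotopic {x y : X} {a b : Path x y} (h : a.Homotopic b) :
    fl (a.trans b.symm) = 1 := by
  rw [← fl_refl, fl_eq_fl_iff]; simp [Path.Homotopic.Quotient.eq.2 h]

end PathClasses

section Whisker

open Topology

variable {x₀ : X} {H : Subgroup (FundamentalGroup X x₀)}

variable (H) in
lemma equivalence_hRel :
    Equivalence (HRel x₀ (loopMem x₀ H)) where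
  refl := fun ⟨_, a⟩ => ⟨rfl, show fl _ ∈ H by
    rw [Path.cast_rfl_rfl, fl_trans_symm_self]; exact H.one_mem⟩
  symm := by
    rintro ⟨y, a⟩ ⟨y', b⟩ ⟨h, hab : fl _ ∈ H⟩
    change y = y' at h
    subst h
    refine ⟨rfl, show fl _ ∈ H from ?_⟩
    rw [Path.cast_rfl_rfl, ← inv_fl_trans_symm]
    exact H.inv_mem hab
  trans := by
    rintro ⟨y, a⟩ ⟨y', b⟩ ⟨y'', c⟩ ⟨h, hab : fl _ ∈ H⟩ ⟨h', hbc : fl _ ∈ H⟩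
    change y = y' at h
    change y' = y'' at h'
    subst h h'
    refine ⟨rfl, show fl _ ∈ H from ?_⟩
    rw [Path.cast_rfl_rfl, ← fl_trans_symm_mul _ b]
    exact H.mul_mem hbc hab

lemma mkX_eq_mkX_iff {y : X} (a b : Path x₀ y) :
    mkX x₀ (loopMem x₀ H) ⟨y, a⟩ = mkX x₀ (loopMem x₀ H) ⟨y, b⟩ ↔ fl (a.trans b.symm) ∈ H :=
  ⟨fun h => ((equivalence_hRel H).eqvGen_iff.1 (Quot.eqvGen_exact h)).2,
    fun h => Quot.sound ⟨rfl, h⟩⟩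

lemma mkX_eq_of_homotopic {y : X} {a b : Path x₀ y} (h : a.Homotopic b) :
    mkX x₀ (loopMem x₀ H) ⟨y, a⟩ = mkX x₀ (loopMem x₀ H) ⟨y, b⟩ := by
  rw [mkX_eq_mkX_iff, fl_trans_symm_of_homotopic h]
  exact H.one_mem

lemma mkX_trans_eq_mkX_trans {y z : X} {a b : Path x₀ y}
    (h : mkX x₀ (loopMem x₀ H) ⟨y, a⟩ = mkX x₀ (loopMem x₀ H) ⟨y, b⟩) (c : Path y z) :
    mkX x₀ (loopMem x₀ H) ⟨z, a.trans c⟩ = mkX x₀ (loopMem x₀ H) ⟨z, b.trans c⟩ := by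
  rwa [mkX_eq_mkX_iff, fl_trans_trans_symm, ← mkX_eq_mkX_iff]

lemma mkX_mem_whBasic (γ : PPath X x₀) {U : Set X} (hU : γ.target ∈ U) :
    mkX x₀ (loopMem x₀ H) γ ∈ whBasic x₀ (loopMem x₀ H) γ U :=
  ⟨γ.target, Path.refl _, by simpa [Path.refl_range] using hU,
    mkX_eq_of_homotopic (Path.Homotopic.trans_refl γ.path).symm⟩

lemma target_mem_of_mkX_mem_whBasic {α γ : PPath X x₀} {U : Set X}
    (h : mkX x₀ (loopMem x₀ H) γ ∈ whBasic x₀ (loopMem x₀ H) α U) : γ.target ∈ U := by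
  obtain ⟨y, β, hβ, heq⟩ := h
  obtain rfl : γ.target = y := congrArg (endpt x₀ _) heq
  exact hβ ⟨1, β.target⟩

lemma whBasic_mono {x : X} {P : Path x x → Prop} {α : PPath X x} {U V : Set X} (h : U ⊆ V) :
    whBasic x P α U ⊆ whBasic x P α V :=
  fun _ ⟨z, β, hβ, hq⟩ => ⟨z, β, hβ.trans h, hq⟩

lemma whBasic_subset_of_mkX_mem {α γ : PPath X x₀} {U : Set X}
    (h : mkX x₀ (loopMem x₀ H) γ ∈ whBasic x₀ (loopMem x₀ H) α U) :
    whBasic x₀ (loopMem x₀ H) γ U ⊆ whBasic x₀ (loopMem x₀ H) α U := by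
  obtain ⟨y, β, hβ, heq⟩ := h
  obtain ⟨t, g⟩ := γ
  obtain rfl : t = y := congrArg (endpt x₀ _) heq
  rintro _ ⟨z, β', hβ', rfl⟩
  refine ⟨z, β.trans β', by rw [Path.trans_range]; exact union_subset hβ hβ', ?_⟩
  calc mkX x₀ (loopMem x₀ H) ⟨z, g.trans β'⟩
      = mkX x₀ (loopMem x₀ H) ⟨z, (α.path.trans β).trans β'⟩ := mkX_trans_eq_mkX_trans heq β'
    _ = mkX x₀ (loopMem x₀ H) ⟨z, α.path.trans (β.trans β')⟩ :=
      mkX_eq_of_homotopic (Path.Homotopic.trans_assoc _ _ _)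

lemma isTopologicalBasis_whBasic :
    IsTopologicalBasis {S | ∃ (α : PPath X x₀) (U : Set X), IsOpen U ∧ α.target ∈ U ∧
      S = whBasic x₀ (loopMem x₀ H) α U} where
  exists_subset_inter := by
    rintro _ ⟨α, U, hU, -, rfl⟩ _ ⟨α', U', hU', -, rfl⟩ q ⟨hq, hq'⟩
    obtain ⟨γ, rfl⟩ := Quot.exists_rep q
    have hγ : γ.target ∈ U ∩ U' :=
      ⟨target_mem_of_mkX_mem_whBasic hq, target_mem_of_mkX_mem_whBasic hq'⟩
    refine ⟨_, ⟨γ, _, hU.inter hU', hγ, rfl⟩, mkX_mem_whBasic γ hγ, subset_inter ?_ ?_⟩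
    · exact (whBasic_mono inter_subset_left).trans (whBasic_subset_of_mkX_mem hq)
    · exact (whBasic_mono inter_subset_right).trans (whBasic_subset_of_mkX_mem hq')
  sUnion_eq := sUnion_eq_univ_iff.2 fun q => by
    obtain ⟨γ, rfl⟩ := Quot.exists_rep q
    exact ⟨_, ⟨γ, univ, isOpen_univ, mem_univ _, rfl⟩, mkX_mem_whBasic γ (mem_univ _)⟩
  eq_generateFrom := rfl

lemma nhds_basis_whBasic (γ : PPath X x₀) :
    (𝓝 (mkX x₀ (loopMem x₀ H) γ)).HasBasis (fun U => IsOpen U ∧ γ.target ∈ U)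
      (whBasic x₀ (loopMem x₀ H) γ) := by
  refine ⟨fun s => isTopologicalBasis_whBasic.mem_nhds_iff.trans ⟨?_, ?_⟩⟩
  · rintro ⟨_, ⟨α, U, hU, -, rfl⟩, hγ, hs⟩
    exact ⟨U, ⟨hU, target_mem_of_mkX_mem_whBasic hγ⟩, (whBasic_subset_of_mkX_mem hγ).trans hs⟩
  · rintro ⟨U, ⟨hU, hγU⟩, hs⟩
    exact ⟨_, ⟨γ, U, hU, hγU, rfl⟩, mkX_mem_whBasic γ hγU, hs⟩

lemma exists_eq_mkFib {x y : X} {P : Path x x → Prop} (q : Fib x P y) :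
    ∃ δ : Path x y, q = mkFib x P δ := by
  obtain ⟨q, rfl⟩ := q
  obtain ⟨⟨t, δ⟩, rfl⟩ := Quot.exists_rep q
  exact ⟨δ, rfl⟩

lemma nhds_basis_mkFib {y : X} (a : Path x₀ y) :
    (𝓝 (mkFib x₀ (loopMem x₀ H) a)).HasBasis (fun U => IsOpen U ∧ y ∈ U)
      fun U => {q | ∃ β : Path y y, range ⇑β ⊆ U ∧ q = mkFib x₀ (loopMem x₀ H) (a.trans β)} := by
  rw [nhds_induced]
  refine ((nhds_basis_whBasic ⟨y, a⟩).comap Subtype.val).congr (fun _ => Iff.rfl) fun U _ => ?_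
  ext q
  constructor
  · rintro ⟨z, β, hβ, hq⟩
    obtain rfl : y = z := q.2.symm.trans (congrArg (endpt x₀ _) hq)
    exact ⟨β, hβ, Subtype.ext hq⟩
  · rintro ⟨β, hβ, rfl⟩
    exact ⟨y, β, hβ, rfl⟩

lemma mkFib_trans_trans_eq_of_transfer (hH : H.Normal) {a b β₁ β₂ γ : Path x₀ x₀}
    (h : fl ((b.symm.trans (β₁.trans b.symm.symm)).trans γ.symm) ∈ H) :
    mkFib x₀ (loopMem x₀ H) ((a.trans β₁).trans (b.trans β₂)) =
      mkFib x₀ (loopMem x₀ H) ((a.trans b).trans (γ.trans β₂)) := by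
  refine Subtype.ext ((mkX_eq_mkX_iff _ _).2 ?_)
  have hconj : fl (((a.trans β₁).trans (b.trans β₂)).trans ((a.trans b).trans (γ.trans β₂)).symm)
      = (fl b * fl a)⁻¹ * fl ((b.symm.trans (β₁.trans b.symm.symm)).trans γ.symm) *
        (fl b * fl a)⁻¹⁻¹ := by
    simp only [fl_trans, fl_symm]
    group
  rw [hconj]
  exact hH.conj_mem _ h _

lemma mkFib_symm_eq_of_transfer (hH : H.Normal) {c β γ : Path x₀ x₀}
    (h : fl ((c.trans (β.symm.trans c.symm)).trans γ.symm) ∈ H) :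
    mkFib x₀ (loopMem x₀ H) (c.trans β).symm = mkFib x₀ (loopMem x₀ H) (c.symm.trans γ) := by
  refine Subtype.ext ((mkX_eq_mkX_iff _ _).2 ?_)
  have hconj : fl ((c.trans β).symm.trans (c.symm.trans γ).symm)
      = fl c * fl ((c.trans (β.symm.trans c.symm)).trans γ.symm) * (fl c)⁻¹ := by
    simp only [fl_trans, fl_symm]
    group
  rw [hconj]
  exact hH.conj_mem _ h _

theorem continuous_fib_mul (hH : H.Normal) (hslt : IsHSLTAt x₀ H)
    {mul : Fib x₀ (loopMem x₀ H) x₀ → Fib x₀ (loopMem x₀ H) x₀ → Fib x₀ (loopMem x₀ H) x₀}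
    (hmul : ∀ a b : Path x₀ x₀,
      mul (mkFib x₀ (loopMem x₀ H) a) (mkFib x₀ (loopMem x₀ H) b) =
        mkFib x₀ (loopMem x₀ H) (a.trans b)) :
    Continuous fun q : Fib x₀ (loopMem x₀ H) x₀ × Fib x₀ (loopMem x₀ H) x₀ => mul q.1 q.2 := by
  refine continuous_iff_continuousAt.2 fun ⟨q₁, q₂⟩ => ?_
  obtain ⟨a, rfl⟩ := exists_eq_mkFib q₁
  obtain ⟨b, rfl⟩ := exists_eq_mkFib q₂
  have hbasis := nhds_basis_mkFib (H := H) (a.trans b)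
  rw [← hmul] at hbasis
  refine (((nhds_basis_mkFib a).prod_nhds (nhds_basis_mkFib b)).tendsto_iff hbasis).2
    fun U ⟨hU, hx₀U⟩ => ?_
  obtain ⟨V, hV, hx₀V, htransfer⟩ := hslt x₀ b.symm U hU hx₀U
  refine ⟨(V, U), ⟨⟨hV, hx₀V⟩, hU, hx₀U⟩, ?_⟩
  rintro _ ⟨⟨β₁, hβ₁, hq₁⟩, β₂, hβ₂, hq₂⟩
  obtain ⟨γ, hγ, hmem⟩ := htransfer β₁ hβ₁
  refine ⟨γ.trans β₂, by rw [Path.trans_range]; exact union_subset hγ hβ₂, ?_⟩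
  rw [hq₁, hq₂, hmul]
  exact mkFib_trans_trans_eq_of_transfer hH hmem

theorem continuous_fib_inv (hH : H.Normal) (hslt : IsHSLTAt x₀ H)
    {inv : Fib x₀ (loopMem x₀ H) x₀ → Fib x₀ (loopMem x₀ H) x₀}
    (hinv : ∀ γ : Path x₀ x₀,
      inv (mkFib x₀ (loopMem x₀ H) γ) = mkFib x₀ (loopMem x₀ H) γ.symm) :
    Continuous inv := by
  refine continuous_iff_continuousAt.2 fun q => ?_
  obtain ⟨c, rfl⟩ := exists_eq_mkFib q
  have hbasis := nhds_basis_mkFib (H := H) c.symm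
  rw [← hinv] at hbasis
  refine ((nhds_basis_mkFib c).tendsto_iff hbasis).2 fun U ⟨hU, hx₀U⟩ => ?_
  obtain ⟨V, hV, hx₀V, htransfer⟩ := hslt x₀ c U hU hx₀U
  refine ⟨V, ⟨hV, hx₀V⟩, ?_⟩
  rintro _ ⟨β, hβ, rfl⟩
  obtain ⟨γ, hγ, hmem⟩ := htransfer β.symm (by rwa [Path.symm_range])
  refine ⟨γ, hγ, ?_⟩
  rw [hinv]
  exact mkFib_symm_eq_of_transfer hH hmem

end Whisker

theorem statement1_general {X : Type u} [TopologicalSpace X] (x₀ : X)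
    (H : Subgroup (FundamentalGroup X x₀)) (hH : H.Normal) (hslt : IsHSLTAt x₀ H) :
    (∀ mul : Fib x₀ (loopMem x₀ H) x₀ → Fib x₀ (loopMem x₀ H) x₀ → Fib x₀ (loopMem x₀ H) x₀,
      (∀ a b : Path x₀ x₀,
        mul (mkFib x₀ (loopMem x₀ H) a) (mkFib x₀ (loopMem x₀ H) b) =
          mkFib x₀ (loopMem x₀ H) (a.trans b)) →
      Continuous fun q : Fib x₀ (loopMem x₀ H) x₀ × Fib x₀ (loopMem x₀ H) x₀ =>
        mul q.1 q.2) ∧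
    (∀ inv : Fib x₀ (loopMem x₀ H) x₀ → Fib x₀ (loopMem x₀ H) x₀,
      (∀ γ : Path x₀ x₀,
        inv (mkFib x₀ (loopMem x₀ H) γ) = mkFib x₀ (loopMem x₀ H) γ.symm) →
      Continuous inv) :=
  ⟨fun _ hmul => continuous_fib_mul hH hslt hmul, fun _ hinv => continuous_fib_inv hH hslt hinv⟩

/-- Let `H` be a normal subgroup of `π₁(X, x₀)` and let `X` be `H`-SLT at
`x₀`. Then the fiber `(p_H⁻¹(x₀))^wh` is a topological group: both the concatenation map
and the inversion map are continuous. -/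
theorem statement1 {X : Type u} [TopologicalSpace X] [PathConnectedSpace X] (x₀ : X)
    (H : Subgroup (FundamentalGroup X x₀)) (hH : H.Normal) (hslt : IsHSLTAt x₀ H) :
    (∀ mul : Fib x₀ (loopMem x₀ H) x₀ → Fib x₀ (loopMem x₀ H) x₀ → Fib x₀ (loopMem x₀ H) x₀,
      (∀ a b : Path x₀ x₀,
        mul (mkFib x₀ (loopMem x₀ H) a) (mkFib x₀ (loopMem x₀ H) b) =
          mkFib x₀ (loopMem x₀ H) (a.trans b)) →
      Continuous fun q : Fib x₀ (loopMem x₀ H) x₀ × Fib x₀ (loopMem x₀ H) x₀ =>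
        mul q.1 q.2) ∧
    (∀ inv : Fib x₀ (loopMem x₀ H) x₀ → Fib x₀ (loopMem x₀ H) x₀,
      (∀ γ : Path x₀ x₀,
        inv (mkFib x₀ (loopMem x₀ H) γ) = mkFib x₀ (loopMem x₀ H) γ.symm) →
      Continuous inv) :=
  statement1_general x₀ H hH hslt

end SLTF
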